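/- With F the Newton iterator of f = X² - TX + U and h_n defined by h₀ = T, h_{n+1} = h_n² - 2U^{2^n}, the identity F^{(n+1)}(T) - F^{(n)}(T) = -U^{2^n}/(h₀ h₁ ⋯ h_n) holds in Q(T,U) for all n ≥ 0. -/

import Mathlib

noncomputable section
namespace Paper
open MvPolynomial Finset

abbrev K : Type := FractionRing (MvPolynomial (Fin 2) ℚ)

def T : K := algebraMap (MvPolynomial (Fin 2) ℚ) K (X 0)
def U : K := algebraMap (MvPolynomial (Fin 2) ℚ) K (X 1)

/-- The Newton iterator of `f = X² - T·X + U`. -/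
def F (x : K) : K := (x ^ 2 - U) / (2 * x - T)

/-- `h 0 = T`, `h (n+1) = h n ² - 2 U^(2^n)`. -/
def h : ℕ → K
  | 0 => T
  | n + 1 => h n ^ 2 - 2 * U ^ 2 ^ n

/-- Polynomial lift of `h`. -/
def Hp : ℕ → MvPolynomial (Fin 2) ℚ
  | 0 => X 0
  | n + 1 => Hp n ^ 2 - 2 * (X 1) ^ 2 ^ n

lemma h_eq (n : ℕ) : h n = algebraMap (MvPolynomial (Fin 2) ℚ) K (Hp n) := by
  induction n with
  | zero => rfl
  | succ n ih =>
    simp only [h, Hp, ih, map_sub, map_mul, map_pow, map_ofNat, U]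

lemma Hp_ne (n : ℕ) : Hp n ≠ 0 := by
  have : ∀ n, aeval (fun i : Fin 2 => if i = 0 then (1 : ℚ) else 0) (Hp n) = 1 := by
    intro n
    induction n with
    | zero => simp [Hp]
    | succ n ih =>
      have ih' : eval (fun i : Fin 2 => if i = 0 then (1 : ℚ) else 0) (Hp n) = 1 := by simpa using ih
      simp [Hp, ih', zero_pow (pow_ne_zero n two_ne_zero)]
  intro hzero
  have := this n
  rw [hzero] at this
  simp at this

lemma h_ne (n : ℕ) : h n ≠ 0 := by
  rw [h_eq]
  exact (map_ne_zero_iff _ (IsFractionRing.injective _ _)).mpr (Hp_ne n)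

def P (n : ℕ) : K := ∏ m ∈ Finset.range n, h m

lemma P_ne (n : ℕ) : P n ≠ 0 := Finset.prod_ne_zero_iff.mpr fun m _ => h_ne m

lemma keyc (n : ℕ) : h n ^ 2 - (T ^ 2 - 4 * U) * P n ^ 2 = 4 * U ^ 2 ^ n := by
  induction n with
  | zero =>
    show T ^ 2 - (T^2 - 4*U) * P 0 ^ 2 = 4 * U ^ 2 ^ 0
    simp [P]
  | succ n ih =>
    have hP : P (n + 1) = P n * h n := by
      simp [P, Finset.prod_range_succ]
    rw [hP]
    show (h n ^ 2 - 2 * U ^ 2 ^ n) ^ 2 - _ = _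
    rw [show (2:ℕ)^(n+1) = 2^n * 2 from pow_succ 2 n, pow_mul]
    linear_combination (h n ^ 2) * ih

lemma keyb (n : ℕ) : 2 * F^[n] T - T = h n / P n := by
  induction n with
  | zero => simp [P, h]; ring
  | succ n ih =>
    rw [Function.iterate_succ_apply']
    have hx : F^[n] T = (h n / P n + T) / 2 := by linear_combination ih / 2
    rw [hx, F]
    have hh := h_ne n
    have hp := P_ne n
    have hP : P (n + 1) = P n * h n := by simp [P, Finset.prod_range_succ]
    show _ = h (n + 1) / P (n + 1)
    rw [hP, h,
      show (2:K) * ((h n / P n + T) / 2) - T = h n / P n by ring]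
    field_simp
    ring_nf
    linear_combination (-1) * keyc n

theorem stmt_3 (n : ℕ) :
    F^[n + 1] T - F^[n] T = -(U ^ 2 ^ n / ∏ m ∈ Finset.range (n + 1), h m) := by
  have hx : F^[n] T = (h n / P n + T) / 2 := by linear_combination (keyb n) / 2
  have hh := h_ne n
  have hp := P_ne n
  have hP : (∏ m ∈ Finset.range (n + 1), h m) = P n * h n := by
    simp [P, Finset.prod_range_succ]
  rw [Function.iterate_succ_apply', hx, F, hP,
    show (2:K) * ((h n / P n + T) / 2) - T = h n / P n by ring]
  field_simp
  ring_nf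
  linear_combination (-1) * keyc n

end Paper
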